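/- For every s with Re(s) > 0, the function v_out(y) = y^(-1/2) e^(s/y) K₂(s/y), where K₂ is the modified Bessel function of the second kind, solves the equation 2s v' + (y² v')' - (15/4) v = 0 on (0, ∞). -/

import Mathlib

open MeasureTheory

/-- The modified Bessel function of the second kind of order 2, defined for
`Re z > 0` by its standard integral representation
`K₂(z) = ∫₀^∞ e^(-z cosh t) cosh(2t) dt`. -/
noncomputable def besselK2 (z : ℂ) : ℂ :=
  ∫ t in Set.Ioi (0:ℝ), Complex.exp (-z * Real.cosh t) * (Real.cosh (2 * t) : ℂ)

/-!
Put `Mₙ(z) = ∫₀^∞ e^(-z cosh t) coshⁿ t cosh (ν t) dt` for `Re z > 0`. Gaussian domination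
of the integrand lets us differentiate under the integral, `Mₙ' = -Mₙ₊₁`, so `K_ν = M₀` has
`K_ν' = -M₁` and `K_ν'' = M₂`. Integrating the derivative of
`e^(-z cosh t) (z sinh t cosh νt + ν sinh νt)` over `(0, ∞)` gives the modified Bessel
equation `z² K'' + z K' - (z² + ν²) K = 0`. For `u = e^z K` it reads
`z² u'' + (z - 2z²) u' - (z + ν²) u = 0`, and the substitution `v(y) = y^(-1/2) u(s/y)` turns
this into `2s v' + (y² v')' - (ν² - 1/4) v = 0`; for `ν = 2` the constant is `15/4`.
-/

open Set Filter
open scoped Topology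

namespace Real

theorem one_add_sq_div_two_le_cosh (t : ℝ) : 1 + t ^ 2 / 2 ≤ cosh t := by
  have hsq : (t / 2) ^ 2 ≤ sinh (t / 2) ^ 2 := by
    rw [← sq_abs, ← sq_abs (sinh _), abs_sinh]
    exact pow_le_pow_left₀ (abs_nonneg _) (self_le_sinh_iff.2 (abs_nonneg _)) 2
  have hcosh : cosh t = 1 + 2 * sinh (t / 2) ^ 2 := by
    rw [← cosh_sq_sub_sinh_sq (t / 2), show t = 2 * (t / 2) by ring, cosh_two_mul]; ring_nf
  linarith

theorem cosh_le_exp_abs (x : ℝ) : cosh x ≤ exp |x| := by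
  rw [← cosh_abs, cosh_eq]
  linarith [exp_le_exp.2 (neg_le_self (abs_nonneg x))]

theorem abs_sinh_le_cosh (x : ℝ) : |sinh x| ≤ cosh x := by
  rw [abs_sinh, ← cosh_abs, sinh_eq, cosh_eq]
  linarith [exp_pos (-|x|)]

theorem exp_mul_sub_mul_cosh_le {c : ℝ} (hc : 0 < c) (k t : ℝ) :
    exp (k * t - c * cosh t) ≤ exp (k ^ 2 / c) * exp (-(c / 4) * t ^ 2) := by
  rw [← exp_add, exp_le_exp]
  have hcosh := mul_le_mul_of_nonneg_left (one_add_sq_div_two_le_cosh t) hc.le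
  -- AM-GM: `k t ≤ c t² / 4 + k² / c`
  have hamgm : c * (k * t) ≤ c * (c / 4 * t ^ 2 + k ^ 2 / c) := by
    rw [mul_add, mul_div_cancel₀ _ hc.ne']; nlinarith [sq_nonneg (c / 2 * t - k)]
  nlinarith [le_of_mul_le_mul_left hamgm hc]

theorem integrable_exp_mul_sub_mul_cosh {c : ℝ} (hc : 0 < c) (k : ℝ) :
    Integrable fun t => exp (k * t - c * cosh t) := by
  refine ((integrable_exp_neg_mul_sq (by positivity : 0 < c / 4)).const_mul
    (exp (k ^ 2 / c))).mono' (by fun_prop) (Eventually.of_forall fun t => ?_)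
  rw [norm_of_nonneg (exp_pos _).le]
  exact exp_mul_sub_mul_cosh_le hc k t

theorem tendsto_exp_mul_sub_mul_cosh_atTop {c : ℝ} (hc : 0 < c) (k : ℝ) :
    Tendsto (fun t => exp (k * t - c * cosh t)) atTop (𝓝 0) := by
  have hgauss : Tendsto (fun t : ℝ => exp (-(c / 4) * t ^ 2)) atTop (𝓝 0) :=
    tendsto_exp_atBot.comp <|
      (tendsto_pow_atTop two_ne_zero).const_mul_atTop_of_neg (by linarith)
  exact squeeze_zero (fun t => (exp_pos _).le) (exp_mul_sub_mul_cosh_le hc k)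
    (by simpa using hgauss.const_mul (exp (k ^ 2 / c)))

end Real

theorem Complex.norm_exp_neg_mul_ofReal (z : ℂ) (x : ℝ) :
    ‖Complex.exp (-z * x)‖ = Real.exp (-z.re * x) := by
  simp [Complex.norm_exp]

noncomputable def besselKKernel (ν : ℝ) (n : ℕ) (z : ℂ) (t : ℝ) : ℂ :=
  Complex.exp (-z * Real.cosh t) * ((Real.cosh t : ℂ) ^ n * (Real.cosh (ν * t) : ℂ))

noncomputable def besselKMoment (ν : ℝ) (n : ℕ) (z : ℂ) : ℂ :=
  ∫ t in Ioi (0:ℝ), besselKKernel ν n z t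

theorem besselK2_eq_besselKMoment : besselK2 = besselKMoment 2 0 := by
  ext z; simp [besselK2, besselKMoment, besselKKernel]

section besselKMoment

variable {ν : ℝ} {n : ℕ} {z : ℂ}

theorem continuous_besselKKernel (ν : ℝ) (n : ℕ) (z : ℂ) :
    Continuous (besselKKernel ν n z) := by
  unfold besselKKernel; fun_prop

theorem norm_besselKKernel_le {c t : ℝ} (hcz : c ≤ z.re) (ht : 0 ≤ t) :
    ‖besselKKernel ν n z t‖ ≤ Real.exp ((n + |ν|) * t - c * Real.cosh t) := by
  have hcosh_pos := Real.cosh_pos t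
  have hcosh : Real.cosh t ≤ Real.exp t := by
    simpa [abs_of_nonneg ht] using Real.cosh_le_exp_abs t
  have hcoshν : Real.cosh (ν * t) ≤ Real.exp (|ν| * t) := by
    simpa [abs_mul, abs_of_nonneg ht] using Real.cosh_le_exp_abs (ν * t)
  calc ‖besselKKernel ν n z t‖
      = Real.exp (-z.re * Real.cosh t) * (Real.cosh t ^ n * Real.cosh (ν * t)) := by
        rw [besselKKernel, norm_mul, norm_mul, norm_pow, Complex.norm_exp_neg_mul_ofReal,
          Complex.norm_real, Complex.norm_real, Real.norm_of_nonneg hcosh_pos.le,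
          Real.norm_of_nonneg (Real.cosh_pos _).le]
    _ ≤ Real.exp (-c * Real.cosh t) * (Real.exp t ^ n * Real.exp (|ν| * t)) := by
        gcongr
    _ = Real.exp ((n + |ν|) * t - c * Real.cosh t) := by
        rw [← Real.exp_nat_mul, ← Real.exp_add, ← Real.exp_add]; ring_nf

theorem integrableOn_besselKKernel {c : ℝ} (hc : 0 < c) (hcz : c ≤ z.re) :
    IntegrableOn (besselKKernel ν n z) (Ioi 0) := by
  refine (Real.integrable_exp_mul_sub_mul_cosh hc (n + |ν|)).integrableOn.mono'
    (continuous_besselKKernel ν n z).aestronglyMeasurable ?_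
  filter_upwards [ae_restrict_mem measurableSet_Ioi] with t ht
  exact norm_besselKKernel_le hcz (le_of_lt ht)

theorem hasDerivAt_besselKKernel (ν : ℝ) (n : ℕ) (z : ℂ) (t : ℝ) :
    HasDerivAt (besselKKernel ν n · t) (-besselKKernel ν (n + 1) z t) z := by
  have h := (((hasDerivAt_id z).neg.mul_const (Real.cosh t : ℂ)).cexp).mul_const
    ((Real.cosh t : ℂ) ^ n * (Real.cosh (ν * t) : ℂ))
  refine h.congr_deriv ?_
  simp only [besselKKernel, Pi.neg_apply, id, pow_succ]; ring

theorem hasDerivAt_besselKMoment (hz : 0 < z.re) :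
    HasDerivAt (besselKMoment ν n) (-besselKMoment ν (n + 1) z) z := by
  have hc : 0 < z.re / 2 := by linarith
  have hre : ∀ w ∈ Metric.ball z (z.re / 2), z.re / 2 ≤ w.re := fun w hw => by
    have := (Complex.abs_re_le_norm (w - z)).trans (mem_ball_iff_norm.1 hw).le
    rw [Complex.sub_re, abs_le] at this
    linarith [this.1]
  have h := hasDerivAt_integral_of_dominated_loc_of_deriv_le
    (F := fun w t => besselKKernel ν n w t) (F' := fun w t => -besselKKernel ν (n + 1) w t)
    (bound := fun t => Real.exp ((↑(n + 1) + |ν|) * t - z.re / 2 * Real.cosh t))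
    (Metric.ball_mem_nhds z hc)
    (Eventually.of_forall fun w => (continuous_besselKKernel ν n w).aestronglyMeasurable)
    (integrableOn_besselKKernel hz le_rfl)
    (continuous_besselKKernel ν (n + 1) z).neg.aestronglyMeasurable
    ?_ (Real.integrable_exp_mul_sub_mul_cosh hc _).integrableOn
    (Eventually.of_forall fun t w _ => hasDerivAt_besselKKernel ν n w t)
  · rw [besselKMoment, ← integral_neg]; exact h.2
  · filter_upwards [ae_restrict_mem measurableSet_Ioi] with t ht w hw
    rw [norm_neg]
    exact norm_besselKKernel_le (hre w hw) (le_of_lt ht)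

noncomputable def besselKBoundary (ν : ℝ) (z : ℂ) (t : ℝ) : ℂ :=
  Complex.exp (-z * Real.cosh t) * (z * Real.sinh t * Real.cosh (ν * t) + ν * Real.sinh (ν * t))

theorem hasDerivAt_besselKBoundary (ν : ℝ) (z : ℂ) (t : ℝ) :
    HasDerivAt (besselKBoundary ν z)
      ((z ^ 2 + ν ^ 2) * besselKKernel ν 0 z t + z * besselKKernel ν 1 z t
        - z ^ 2 * besselKKernel ν 2 z t) t := by
  have hcosh := (Real.hasDerivAt_cosh t).ofReal_comp
  have hsinh := (Real.hasDerivAt_sinh t).ofReal_comp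
  have hνt := (hasDerivAt_id t).const_mul ν
  have hcoshν := ((Real.hasDerivAt_cosh (ν * t)).comp t hνt).ofReal_comp
  have hsinhν := ((Real.hasDerivAt_sinh (ν * t)).comp t hνt).ofReal_comp
  have h := (hcosh.const_mul (-z)).cexp.mul
    (((hsinh.const_mul z).mul hcoshν).add (hsinhν.const_mul (ν : ℂ)))
  refine h.congr_deriv ?_
  simp only [besselKKernel, Function.comp_apply, Pi.mul_apply, Pi.add_apply]
  push_cast
  linear_combination
    -Complex.exp (-z * Complex.cosh t) * z ^ 2 * Complex.cosh (ν * t) * Complex.sinh_sq (t : ℂ)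

theorem norm_besselKBoundary_le (t : ℝ) :
    ‖besselKBoundary ν z t‖ ≤ (‖z‖ + |ν|) * ‖besselKKernel ν 1 z t‖ := by
  have hcosh := Real.one_le_cosh t
  have hcoshν := Real.cosh_pos (ν * t)
  have hsinhν : |Real.sinh (ν * t)| ≤ Real.cosh t * Real.cosh (ν * t) :=
    (Real.abs_sinh_le_cosh _).trans (le_mul_of_one_le_left hcoshν.le hcosh)
  have hfactor : ‖(z * Real.sinh t * Real.cosh (ν * t) + ν * Real.sinh (ν * t) : ℂ)‖
      ≤ (‖z‖ + |ν|) * ‖((Real.cosh t : ℂ) ^ 1 * (Real.cosh (ν * t) : ℂ))‖ := by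
    refine (norm_add_le _ _).trans ?_
    simp only [norm_mul, pow_one, Complex.norm_real, Real.norm_eq_abs, abs_of_pos hcoshν,
      abs_of_pos (Real.cosh_pos t)]
    have hz : ‖z‖ * |Real.sinh t| * Real.cosh (ν * t)
        ≤ ‖z‖ * (Real.cosh t * Real.cosh (ν * t)) := by
      rw [mul_assoc]; gcongr; exact Real.abs_sinh_le_cosh t
    have hν : |ν| * |Real.sinh (ν * t)| ≤ |ν| * (Real.cosh t * Real.cosh (ν * t)) := by gcongr
    linarith
  rw [besselKBoundary, besselKKernel, norm_mul, norm_mul, mul_left_comm]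
  gcongr

theorem tendsto_besselKBoundary_atTop (hz : 0 < z.re) :
    Tendsto (besselKBoundary ν z) atTop (𝓝 0) := by
  refine squeeze_zero_norm' ?_ (by
    simpa using (Real.tendsto_exp_mul_sub_mul_cosh_atTop hz (1 + |ν|)).const_mul (‖z‖ + |ν|))
  filter_upwards [eventually_ge_atTop 0] with t ht
  refine (norm_besselKBoundary_le t).trans ?_
  gcongr
  simpa using norm_besselKKernel_le (ν := ν) (n := 1) le_rfl ht

theorem besselKMoment_ode (hz : 0 < z.re) :
    z ^ 2 * besselKMoment ν 2 z - z * besselKMoment ν 1 z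
      - (z ^ 2 + ν ^ 2) * besselKMoment ν 0 z = 0 := by
  have hint (n : ℕ) := integrableOn_besselKKernel (ν := ν) (n := n) hz le_rfl
  have h0 := (hint 0).const_mul (z ^ 2 + ν ^ 2)
  have h1 := (hint 1).const_mul z
  have h2 := (hint 2).const_mul (z ^ 2)
  have h01 : IntegrableOn (fun t => (z ^ 2 + ν ^ 2) * besselKKernel ν 0 z t
      + z * besselKKernel ν 1 z t) (Ioi 0) := h0.add h1
  have hFTC := integral_Ioi_of_hasDerivAt_of_tendsto'
    (fun t _ => hasDerivAt_besselKBoundary ν z t) (h01.sub h2) (tendsto_besselKBoundary_atTop hz)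
  rw [integral_sub h01 h2, integral_add h0 h1, integral_const_mul, integral_const_mul,
    integral_const_mul] at hFTC
  simp only [besselKBoundary, Real.sinh_zero, mul_zero, Complex.ofReal_zero] at hFTC
  unfold besselKMoment
  linear_combination -hFTC

end besselKMoment

section VacuumEquation

variable {s ν : ℂ} {y : ℝ}

theorem Complex.re_div_ofReal_pos (hs : 0 < s.re) (hy : 0 < y) : 0 < (s / y).re := by
  rw [Complex.div_ofReal_re]; exact div_pos hs hy

theorem hasDerivAt_ofReal_cpow_neg_half (hy : 0 < y) :
    HasDerivAt (fun x : ℝ => (x : ℂ) ^ (-(1 : ℂ) / 2))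
      (-(y : ℂ) ^ (-(1 : ℂ) / 2) / (2 * y)) y := by
  have hy0 : (y : ℂ) ≠ 0 := by exact_mod_cast hy.ne'
  refine (Complex.hasStrictDerivAt_cpow_const (c := -(1 : ℂ) / 2)
    (Complex.ofReal_mem_slitPlane.2 hy)).hasDerivAt.comp_ofReal.congr_deriv ?_
  rw [Complex.cpow_sub _ _ hy0, Complex.cpow_one]
  field_simp

theorem hasDerivAt_comp_div_ofReal {f f' : ℂ → ℂ}
    (hf : ∀ z : ℂ, 0 < z.re → HasDerivAt f (f' z) z) (hs : 0 < s.re) (hy : 0 < y) :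
    HasDerivAt (fun x : ℝ => f (s / x)) (-(s / y ^ 2) * f' (s / y)) y := by
  have hy0 : (y : ℂ) ≠ 0 := by exact_mod_cast hy.ne'
  have hdiv : HasDerivAt (fun x : ℝ => s / (x : ℂ)) (-(s / y ^ 2)) y := by
    refine ((hasDerivAt_inv hy0).const_mul s).comp_ofReal.congr_deriv ?_
    field_simp
  rw [mul_comm]
  exact (hf _ (Complex.re_div_ofReal_pos hs hy)).comp y hdiv

variable {u u' u'' : ℂ → ℂ}

theorem hasDerivAt_outgoing (hu : ∀ z : ℂ, 0 < z.re → HasDerivAt u (u' z) z)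
    (hs : 0 < s.re) (hy : 0 < y) :
    HasDerivAt (fun x : ℝ => (x : ℂ) ^ (-(1 : ℂ) / 2) * u (s / x))
      ((y : ℂ) ^ (-(1 : ℂ) / 2) * (-u (s / y) / (2 * y) - s / y ^ 2 * u' (s / y))) y := by
  refine ((hasDerivAt_ofReal_cpow_neg_half hy).mul
    (hasDerivAt_comp_div_ofReal hu hs hy)).congr_deriv ?_
  ring

theorem hasDerivAt_sq_mul_deriv_outgoing (hu : ∀ z : ℂ, 0 < z.re → HasDerivAt u (u' z) z)
    (hu' : ∀ z : ℂ, 0 < z.re → HasDerivAt u' (u'' z) z) (hs : 0 < s.re) (hy : 0 < y) :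
    HasDerivAt
      (fun x : ℝ => (x : ℂ) ^ 2 * deriv (fun x : ℝ => (x : ℂ) ^ (-(1 : ℂ) / 2) * u (s / x)) x)
      ((y : ℂ) ^ (-(1 : ℂ) / 2) *
        ((s / y) ^ 2 * u'' (s / y) + s / y * u' (s / y) - u (s / y) / 4)) y := by
  have hy0 : (y : ℂ) ≠ 0 := by exact_mod_cast hy.ne'
  have heq :
      (fun x : ℝ => (x : ℂ) ^ (-(1 : ℂ) / 2) * (-(x : ℂ) / 2 * u (s / x) - s * u' (s / x)))
      =ᶠ[𝓝 y] fun x : ℝ =>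
        (x : ℂ) ^ 2 * deriv (fun x : ℝ => (x : ℂ) ^ (-(1 : ℂ) / 2) * u (s / x)) x := by
    filter_upwards [Ioi_mem_nhds hy] with x hx
    have hx0 : (x : ℂ) ≠ 0 := by exact_mod_cast (ne_of_gt hx)
    rw [(hasDerivAt_outgoing hu hs hx).deriv]
    field_simp
  have hlin : HasDerivAt (fun x : ℝ => -(x : ℂ) / 2) (-1 / 2) y :=
    ((hasDerivAt_id (y : ℂ)).comp_ofReal.neg.div_const 2).congr_deriv (by simp)
  refine (((hasDerivAt_ofReal_cpow_neg_half hy).mul ((hlin.mul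
    (hasDerivAt_comp_div_ofReal hu hs hy)).sub
    ((hasDerivAt_comp_div_ofReal hu' hs hy).const_mul s))).congr_of_eventuallyEq
    heq.symm).congr_deriv ?_
  simp only [Pi.mul_apply, Pi.sub_apply]
  field_simp
  ring

theorem vacuum_eq_of_conj_bessel_ode (hu : ∀ z : ℂ, 0 < z.re → HasDerivAt u (u' z) z)
    (hu' : ∀ z : ℂ, 0 < z.re → HasDerivAt u' (u'' z) z)
    (hode : ∀ z : ℂ, 0 < z.re →
      z ^ 2 * u'' z + (z - 2 * z ^ 2) * u' z - (z + ν ^ 2) * u z = 0)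
    (hs : 0 < s.re) (hy : 0 < y) :
    let v : ℝ → ℂ := fun x => (x : ℂ) ^ (-(1 : ℂ) / 2) * u (s / x)
    2 * s * deriv v y + deriv (fun x : ℝ => (x : ℂ) ^ 2 * deriv v x) y
      - (ν ^ 2 - 1 / 4) * v y = 0 := by
  intro v
  rw [(hasDerivAt_outgoing hu hs hy).deriv,
    (hasDerivAt_sq_mul_deriv_outgoing hu hu' hs hy).deriv]
  linear_combination (y : ℂ) ^ (-(1 : ℂ) / 2) * hode _ (Complex.re_div_ofReal_pos hs hy)

theorem vacuum_eq_of_bessel_ode {K K' K'' : ℂ → ℂ}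
    (hK : ∀ z : ℂ, 0 < z.re → HasDerivAt K (K' z) z)
    (hK' : ∀ z : ℂ, 0 < z.re → HasDerivAt K' (K'' z) z)
    (hode : ∀ z : ℂ, 0 < z.re → z ^ 2 * K'' z + z * K' z - (z ^ 2 + ν ^ 2) * K z = 0)
    (hs : 0 < s.re) (hy : 0 < y) :
    let v : ℝ → ℂ := fun x => (x : ℂ) ^ (-(1 : ℂ) / 2) * Complex.exp (s / x) * K (s / x)
    2 * s * deriv v y + deriv (fun x : ℝ => (x : ℂ) ^ 2 * deriv v x) y
      - (ν ^ 2 - 1 / 4) * v y = 0 := by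
  simp only [mul_assoc _ (Complex.exp _)]
  refine vacuum_eq_of_conj_bessel_ode (u := fun z => Complex.exp z * K z)
    (u' := fun z => Complex.exp z * (K z + K' z))
    (u'' := fun z => Complex.exp z * (K z + 2 * K' z + K'' z))
    (fun z hz => ((Complex.hasDerivAt_exp z).mul (hK z hz)).congr_deriv (by ring))
    (fun z hz => ((Complex.hasDerivAt_exp z).mul ((hK z hz).add (hK' z hz))).congr_deriv
      (by simp only [Pi.add_apply]; ring))
    (fun z hz => by linear_combination Complex.exp z * hode z hz) hs hy

end VacuumEquation

/-- For `Re s > 0`, the outgoing solution `v_out(y) = y^(-1/2) e^(s/y) K₂(s/y)` solves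
the vacuum eigenvalue equation `2s v' + (y² v')' - (15/4) v = 0` on `(0, ∞)`. -/
theorem outgoing_solution_vacuum (s : ℂ) (hs : 0 < s.re) :
    let vout : ℝ → ℂ := fun y =>
      (y : ℂ) ^ (-(1:ℂ)/2) * Complex.exp (s / (y : ℂ)) * besselK2 (s / (y : ℂ))
    ∀ y : ℝ, 0 < y →
      2 * s * deriv vout y + deriv (fun y' : ℝ => (y' : ℂ) ^ 2 * deriv vout y') y
        - (15/4) * vout y = 0 := by
  intro vout y hy
  have h := vacuum_eq_of_bessel_ode (ν := 2) (K' := fun z => -besselKMoment 2 1 z)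
    (K'' := besselKMoment 2 2)
    (fun z hz => besselK2_eq_besselKMoment ▸ hasDerivAt_besselKMoment hz)
    (fun z hz => (hasDerivAt_besselKMoment hz).neg.congr_deriv (neg_neg _))
    (fun z hz => by
      have := besselKMoment_ode (ν := 2) hz
      push_cast at this
      rw [besselK2_eq_besselKMoment]
      linear_combination this)
    hs hy
  rwa [show (2 : ℂ) ^ 2 - 1 / 4 = 15 / 4 by norm_num] at h
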